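/- For any x ∈ H and y ∈ K (ultrametric normed spaces over a nonarchimedean field admitting norm-orthogonal bases of finite-dimensional subspaces), the projective norm of a simple tensor is multiplicative: ‖x ⊗ y‖_π = ‖x‖·‖y‖. -/

import Mathlib

open scoped TensorProduct

/-- The ultrametric projective seminorm on the algebraic tensor product:
`‖u‖_π = inf { maxᵢ ‖xᵢ‖·‖yᵢ‖ : u = Σᵢ xᵢ ⊗ yᵢ }`. -/
noncomputable def projNorm {F H K : Type*} [NormedField F]
    [NormedAddCommGroup H] [NormedSpace F H]
    [NormedAddCommGroup K] [NormedSpace F K] (u : H ⊗[F] K) : ℝ :=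
  sInf {r : ℝ | ∃ (n : ℕ) (x : Fin n → H) (y : Fin n → K),
    u = ∑ i, x i ⊗ₜ[F] y i ∧ r = ⨆ i, ‖x i‖ * ‖y i‖}

/-- Every finitely generated subspace admits a norm-orthogonal basis. -/
def FinDimOrthogonalizable (F E : Type*) [NormedField F]
    [NormedAddCommGroup E] [NormedSpace F E] : Prop :=
  ∀ (n : ℕ) (v : Fin n → E), ∃ (m : ℕ) (b : Fin m → E),
    Submodule.span F (Set.range v) = Submodule.span F (Set.range b) ∧
    ∀ α : Fin m → F, ‖∑ i, α i • b i‖ = ⨆ i, ‖α i • b i‖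

/-! Write `x = Σⱼ βⱼ bⱼ` and `xᵢ = Σⱼ αᵢⱼ bⱼ` in a norm-orthogonal basis `b` of the span of
`x, x₁, …, xₙ`. Then `x ⊗ y = Σᵢ xᵢ ⊗ yᵢ` becomes `Σⱼ bⱼ ⊗ (βⱼ y - Σᵢ αᵢⱼ yᵢ) = 0`, and
orthogonality forces `βⱼ y = Σᵢ αᵢⱼ yᵢ` whenever `bⱼ ≠ 0`. Choosing `j` with `‖x‖ = ‖βⱼ bⱼ‖`, the
ultrametric inequality in `K` and `‖αᵢⱼ bⱼ‖ ≤ ‖xᵢ‖` give `‖x‖ ‖y‖ ≤ maxᵢ ‖xᵢ‖ ‖yᵢ‖`. -/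

section NormOrthogonal

variable (F : Type*) {E ι : Type*} [NormedField F] [NormedAddCommGroup E] [NormedSpace F E]
  [Fintype ι]

def IsNormOrthogonal (b : ι → E) : Prop :=
  ∀ α : ι → F, ‖∑ i, α i • b i‖ = ⨆ i, ‖α i • b i‖

variable {F} {b : ι → E}

theorem IsNormOrthogonal.norm_smul_le (hb : IsNormOrthogonal F b) (α : ι → F) (j : ι) :
    ‖α j • b j‖ ≤ ‖∑ i, α i • b i‖ :=
  (hb α).symm ▸ le_ciSup (f := fun i => ‖α i • b i‖) (Set.finite_range _).bddAbove j

theorem IsNormOrthogonal.exists_norm_sum_eq (hb : IsNormOrthogonal F b) {α : ι → F}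
    (hα : ∑ i, α i • b i ≠ 0) : ∃ j, ‖∑ i, α i • b i‖ = ‖α j • b j‖ := by
  have : Nonempty ι := by
    by_contra! hι
    exact hα (by simp)
  obtain ⟨j, hj⟩ := exists_eq_ciSup_of_finite (f := fun i => ‖α i • b i‖)
  exact ⟨j, (hb α).trans hj.symm⟩

/-- Pairing with an arbitrary functional `φ` on `W` turns the relation into
`Σⱼ φ(zⱼ) bⱼ = 0`, and functionals separate the points of a vector space. -/
theorem IsNormOrthogonal.eq_zero_of_sum_tmul_eq_zero {W : Type*} [AddCommGroup W] [Module F W]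
    (hb : IsNormOrthogonal F b) {z : ι → W} (h : ∑ i, b i ⊗ₜ[F] z i = 0) {j : ι}
    (hj : b j ≠ 0) : z j = 0 := by
  refine (Module.forall_dual_apply_eq_zero_iff F (z j)).mp fun φ => ?_
  have hφ : ∑ i, φ (z i) • b i = 0 := by
    simpa using congrArg (TensorProduct.rid F E ∘ φ.lTensor E) h
  have hle := hb.norm_smul_le (fun i => φ (z i)) j
  rw [hφ, norm_zero, norm_le_zero_iff] at hle
  exact (smul_eq_zero.mp hle).resolve_right hj

end NormOrthogonal

theorem sum_tmul_sum_smul {R M N ι κ : Type*} [CommSemiring R] [AddCommMonoid M] [Module R M]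
    [AddCommMonoid N] [Module R N] [Fintype ι] [Fintype κ] (b : ι → M) (α : κ → ι → R)
    (w : κ → N) :
    ∑ j, b j ⊗ₜ[R] (∑ i, α i j • w i) = ∑ i, (∑ j, α i j • b j) ⊗ₜ[R] w i := by
  simp only [TensorProduct.tmul_sum, TensorProduct.sum_tmul, TensorProduct.tmul_smul,
    TensorProduct.smul_tmul']
  exact Finset.sum_comm

section ProjNorm

variable {F H K : Type*} [NormedField F] [NormedAddCommGroup H] [NormedSpace F H]
  [NormedAddCommGroup K] [NormedSpace F K]

theorem norm_mul_norm_le_of_tmul_eq_sum [IsUltrametricDist K] (hH : FinDimOrthogonalizable F H)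
    {x : H} {y : K} {n : ℕ} {xs : Fin n → H} {ys : Fin n → K}
    (h : x ⊗ₜ[F] y = ∑ i, xs i ⊗ₜ[F] ys i) : ‖x‖ * ‖y‖ ≤ ⨆ i, ‖xs i‖ * ‖ys i‖ := by
  by_cases hx : x = 0
  · simpa [hx] using Real.iSup_nonneg fun i => by positivity
  obtain ⟨m, b, hspan, hb : IsNormOrthogonal F b⟩ := hH (n + 1) (Fin.cons x xs)
  have hcoord : ∀ k, ∃ c : Fin m → F, ∑ j, c j • b j = Fin.cons (α := fun _ => H) x xs k :=
    fun k => (Submodule.mem_span_range_iff_exists_fun F).mp (hspan ▸ Submodule.subset_span ⟨k, rfl⟩)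
  obtain ⟨β, rfl⟩ := hcoord 0
  choose α hα using fun i : Fin n => hcoord i.succ
  simp only [Fin.cons_succ] at hα
  obtain ⟨j₀, hj₀⟩ := hb.exists_norm_sum_eq hx
  have hbj₀ : b j₀ ≠ 0 := by
    rintro hbj₀
    rw [hbj₀, smul_zero, norm_zero, norm_eq_zero] at hj₀
    exact hx hj₀
  have hrel : ∑ j, b j ⊗ₜ[F] (β j • y - ∑ i, α i j • ys i) = 0 := by
    simp only [TensorProduct.tmul_sub, Finset.sum_sub_distrib, sum_tmul_sum_smul, hα, ← h,
      TensorProduct.sum_tmul, TensorProduct.smul_tmul, sub_self]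
  have hcoef : β j₀ • y = ∑ i, α i j₀ • ys i :=
    sub_eq_zero.mp (hb.eq_zero_of_sum_tmul_eq_zero hrel hbj₀)
  have hultra : ‖β j₀ • y‖ ≤ ⨆ i, ‖α i j₀ • ys i‖ := by
    rw [hcoef]
    exact IsUltrametricDist.norm_sum_le_of_forall_le_of_nonneg
      (Real.iSup_nonneg fun i => norm_nonneg _)
      fun i _ => le_ciSup (f := fun i => ‖α i j₀ • ys i‖) (Set.finite_range _).bddAbove i
  calc ‖∑ j, β j • b j‖ * ‖y‖ = ‖b j₀‖ * ‖β j₀ • y‖ := by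
        rw [hj₀, norm_smul, norm_smul]; ring
    _ ≤ ‖b j₀‖ * ⨆ i, ‖α i j₀ • ys i‖ := by gcongr
    _ = ⨆ i, ‖α i j₀ • b j₀‖ * ‖ys i‖ := by
        rw [Real.mul_iSup_of_nonneg (norm_nonneg _)]
        simp only [norm_smul]
        ring_nf
    _ ≤ ⨆ i, ‖xs i‖ * ‖ys i‖ := by
        refine ciSup_mono (Set.finite_range _).bddAbove fun i => ?_
        gcongr
        exact hα i ▸ hb.norm_smul_le (α i) j₀

end ProjNorm

theorem projNorm_tmul_general
    {F H K : Type*} [NormedField F]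
    [NormedAddCommGroup H] [NormedSpace F H]
    [NormedAddCommGroup K] [NormedSpace F K] [IsUltrametricDist K]
    (hH : FinDimOrthogonalizable F H)
    (x : H) (y : K) :
    projNorm (x ⊗ₜ[F] y) = ‖x‖ * ‖y‖ := by
  have hxy : ‖x‖ * ‖y‖ ∈ {r : ℝ | ∃ (n : ℕ) (xs : Fin n → H) (ys : Fin n → K),
      x ⊗ₜ[F] y = ∑ i, xs i ⊗ₜ[F] ys i ∧ r = ⨆ i, ‖xs i‖ * ‖ys i‖} :=
    ⟨1, fun _ => x, fun _ => y, by simp, ciSup_const.symm⟩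
  refine le_antisymm (csInf_le ⟨0, ?_⟩ hxy) (le_csInf ⟨_, hxy⟩ ?_)
  · rintro r ⟨n, xs, ys, -, rfl⟩
    exact Real.iSup_nonneg fun i => by positivity
  · rintro r ⟨n, xs, ys, h, rfl⟩
    exact norm_mul_norm_le_of_tmul_eq_sum hH h

/-- For `x ∈ H` and `y ∈ K` (ultrametric normed spaces over a
nonarchimedean field in which every finitely generated subspace admits a norm-orthogonal
basis), the projective norm of a simple tensor is multiplicative:
`‖x ⊗ y‖_π = ‖x‖ · ‖y‖`. -/
theorem projNorm_tmul
    {F H K : Type*} [NormedField F] [IsUltrametricDist F]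
    [NormedAddCommGroup H] [NormedSpace F H] [IsUltrametricDist H]
    [NormedAddCommGroup K] [NormedSpace F K] [IsUltrametricDist K]
    (hH : FinDimOrthogonalizable F H) (hK : FinDimOrthogonalizable F K)
    (x : H) (y : K) :
    projNorm (x ⊗ₜ[F] y) = ‖x‖ * ‖y‖ :=
  projNorm_tmul_general hH x y
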